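/- If M is a matroid with bases B₁, B₂ such that |B₁ \ B₂| = 2 and Δ(B₁,B₂) = 3, then the minor M' := (M / (B₁ ∩ B₂)) restricted to B₁ △ B₂ is isomorphic to U_{2,4}. -/

import Mathlib

open scoped symmDiff

noncomputable def Matroid.deltaPairs {α : Type*} (M : Matroid α) (B₁ B₂ : Set α) : ℕ :=
  {p : Sym2 (Set α) | ∃ D₁ D₂, p = s(D₁, D₂) ∧ M.IsBase D₁ ∧ M.IsBase D₂ ∧
    D₁ ∪ D₂ = B₁ ∪ B₂ ∧ D₁ ∩ D₂ = B₁ ∩ B₂}.ncard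

/-- Contraction of `C` in `M`, defined via the dual of a restriction of the dual. -/
noncomputable def Matroid.con {α : Type*} (M : Matroid α) (C : Set α) : Matroid α :=
  (Matroid.restrict M.dual (M.E \ C)).dual

/-!
Write `C = B₁ ∩ B₂` and `X = B₁ ∆ B₂`, so `|X| = 4`. A pair `{D₁, D₂}` counted by `Δ(B₁, B₂)`
is determined by `D₁ \ C`, a `2`-subset of `X`, and `D₂ = C ∪ (X \ (D₁ \ C))`. Choosing `D₁` to
be the member containing a fixed `a ∈ X`, every counted pair is one of the three splittings
`{C ∪ {a, x}, C ∪ (X \ {a, x})}` with `x ∈ X \ {a}`. Hence `Δ(B₁, B₂) = 3` forces all three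
splittings to consist of bases, i.e. `C ∪ S` is a base for every `2`-subset `S` of `X`, so the
bases of `(M / C) | X` are exactly the `2`-subsets of `X`.
-/

open Set

lemma Set.exists_eq_pair_of_encard_eq_two {α : Type*} {s : Set α} {a : α} (hs : s.encard = 2)
    (ha : a ∈ s) : ∃ x ∈ s \ {a}, s = {a, x} := by
  obtain ⟨x, hx⟩ := encard_eq_one.1 (by rw [encard_sdiff_singleton_of_mem ha, hs]; rfl)
  refine ⟨x, hx ▸ rfl, ?_⟩
  rw [← hx, insert_sdiff_singleton, insert_eq_of_mem ha]

lemma Set.ncard_eq_two_iff_encard_eq_two {α : Type*} {s : Set α} : s.ncard = 2 ↔ s.encard = 2 :=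
  ncard_eq_two.trans encard_eq_two.symm

namespace Matroid

variable {α : Type*} {M : Matroid α} {B₁ B₂ D D₁ D₂ S : Set α} {a : α}

def deltaPairSet (M : Matroid α) (B₁ B₂ : Set α) : Set (Sym2 (Set α)) :=
  {p | ∃ D₁ D₂, p = s(D₁, D₂) ∧ M.IsBase D₁ ∧ M.IsBase D₂ ∧
    D₁ ∪ D₂ = B₁ ∪ B₂ ∧ D₁ ∩ D₂ = B₁ ∩ B₂}

lemma deltaPairs_eq_ncard : M.deltaPairs B₁ B₂ = (M.deltaPairSet B₁ B₂).ncard := rfl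

lemma isBase_of_mk_mem_deltaPairSet (h : s(D₁, D₂) ∈ M.deltaPairSet B₁ B₂) :
    M.IsBase D₁ ∧ M.IsBase D₂ := by
  obtain ⟨E₁, E₂, he, hE₁, hE₂, -, -⟩ := h
  rcases Sym2.eq_iff.1 he with ⟨rfl, rfl⟩ | ⟨rfl, rfl⟩
  exacts [⟨hE₁, hE₂⟩, ⟨hE₂, hE₁⟩]

lemma con_eq_contract (C : Set α) : M.con C = M ／ C := rfl

lemma IsBase.encard_symmDiff (h₁ : M.IsBase B₁) (h₂ : M.IsBase B₂) :
    (B₁ ∆ B₂).encard = 2 * (B₁ \ B₂).encard := by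
  rw [Set.symmDiff_def, encard_union_eq disjoint_sdiff_sdiff,
    ← h₁.encard_sdiff_comm h₂, two_mul]

lemma IsBase.encard_sdiff_inter (hD : M.IsBase D) (h₁ : M.IsBase B₁) (hC : B₁ ∩ B₂ ⊆ D) :
    (D \ (B₁ ∩ B₂)).encard = (B₁ \ B₂).encard := by
  have hD' : D \ (B₁ ∩ B₂) = D \ B₁ ∪ D ∩ (B₁ \ B₂) := by
    ext x; simp only [mem_sdiff, mem_inter_iff, mem_union]; tauto
  have h₁' : B₁ \ B₂ = B₁ \ D ∪ D ∩ (B₁ \ B₂) := by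
    ext x; have := @hC x; simp only [mem_sdiff, mem_inter_iff, mem_union] at this ⊢; tauto
  calc (D \ (B₁ ∩ B₂)).encard = (D \ B₁).encard + (D ∩ (B₁ \ B₂)).encard := by
        rw [hD', encard_union_eq (disjoint_sdiff_left.mono_right
          (inter_subset_right.trans sdiff_subset))]
    _ = (B₁ \ D).encard + (D ∩ (B₁ \ B₂)).encard := by rw [hD.encard_sdiff_comm h₁]
    _ = (B₁ \ B₂).encard := by
        rw [← encard_union_eq (disjoint_sdiff_left.mono_right inter_subset_left), ← h₁']

lemma deltaPairSet_subset_image (h₁ : M.IsBase B₁) (hd : (B₁ \ B₂).encard = 2)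
    (ha : a ∈ B₁ ∆ B₂) :
    M.deltaPairSet B₁ B₂ ⊆ (fun x ↦ s(B₁ ∩ B₂ ∪ {a, x}, B₁ ∩ B₂ ∪ (B₁ ∆ B₂ \ {a, x}))) ''
      (B₁ ∆ B₂ \ {a}) := by
  rintro _ ⟨D₁, D₂, rfl, hD₁, hD₂, hU, hI⟩
  wlog haD₁ : a ∈ D₁ generalizing D₁ D₂
  · have haD₂ : a ∈ D₂ := ((hU ▸ symmDiff_subset_union ha : a ∈ D₁ ∪ D₂)).resolve_left haD₁
    rw [Sym2.eq_swap]
    exact this D₂ D₁ hD₂ hD₁ (by rwa [union_comm]) (by rwa [inter_comm]) haD₂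
  have hX : B₁ ∆ B₂ = (B₁ ∪ B₂) \ (B₁ ∩ B₂) := symmDiff_eq_sup_sdiff_inf _ _
  have hCD₁ : B₁ ∩ B₂ ⊆ D₁ := hI ▸ inter_subset_left
  obtain ⟨x, hx, hS⟩ := exists_eq_pair_of_encard_eq_two (s := D₁ \ (B₁ ∩ B₂))
    (hD₁.encard_sdiff_inter h₁ hCD₁ ▸ hd) ⟨haD₁, (hX ▸ ha).2⟩
  have hD₁eq : D₁ = B₁ ∩ B₂ ∪ {a, x} := by rw [← hS, union_sdiff_cancel hCD₁]
  have hD₂eq : D₂ = B₁ ∩ B₂ ∪ (B₁ ∆ B₂ \ {a, x}) := by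
    rw [← inter_union_sdiff D₂ D₁, inter_comm, hI, ← union_sdiff_left, hU, hX, Set.sdiff_sdiff,
      ← hD₁eq]
  refine ⟨x, ⟨hX ▸ ⟨hU ▸ Or.inl hx.1.1, hx.1.2⟩, hx.2⟩, ?_⟩
  rw [hD₁eq, hD₂eq]

lemma isBase_inter_union_of_deltaPairs_eq_three (h₁ : M.IsBase B₁) (h₂ : M.IsBase B₂)
    (hd : (B₁ \ B₂).encard = 2) (hΔ : M.deltaPairs B₁ B₂ = 3) (hS : S ⊆ B₁ ∆ B₂)
    (hS₂ : S.encard = 2) : M.IsBase (B₁ ∩ B₂ ∪ S) := by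
  have hX : (B₁ ∆ B₂).encard = 4 := by rw [h₁.encard_symmDiff h₂, hd]; rfl
  obtain ⟨a, ha⟩ := nonempty_of_encard_ne_zero (s := B₁ \ B₂) (by rw [hd]; simp)
  have haX : a ∈ B₁ ∆ B₂ := Or.inl ha
  have hXa : (B₁ ∆ B₂ \ {a}).encard = 3 := by rw [encard_sdiff_singleton_of_mem haX, hX]; rfl
  have hXa_fin : (B₁ ∆ B₂ \ {a}).Finite := finite_of_encard_eq_coe hXa
  have heq := eq_of_subset_of_ncard_le (deltaPairSet_subset_image h₁ hd haX)
    ((ncard_image_le hXa_fin).trans (by rw [ncard_def, hXa, ← deltaPairs_eq_ncard, hΔ]; rfl))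
    (hXa_fin.image _)
  have hsplit : ∀ x ∈ B₁ ∆ B₂ \ {a},
      M.IsBase (B₁ ∩ B₂ ∪ {a, x}) ∧ M.IsBase (B₁ ∩ B₂ ∪ (B₁ ∆ B₂ \ {a, x})) := fun x hx ↦
    isBase_of_mk_mem_deltaPairSet (heq ▸ mem_image_of_mem _ hx)
  by_cases haS : a ∈ S
  · obtain ⟨x, hx, rfl⟩ := exists_eq_pair_of_encard_eq_two hS₂ haS
    exact (hsplit x ⟨hS hx.1, hx.2⟩).1
  · have hT : (B₁ ∆ B₂ \ S).encard = 2 := by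
      have := encard_sdiff_add_encard_of_subset hS
      rw [hS₂, hX] at this
      generalize (B₁ ∆ B₂ \ S).encard = t at this ⊢
      enat_to_nat; omega
    obtain ⟨x, hx, hTx⟩ := exists_eq_pair_of_encard_eq_two hT ⟨haX, haS⟩
    rw [← sdiff_sdiff_cancel_left hS, hTx]
    exact (hsplit x ⟨hx.1.1, hx.2⟩).2

lemma isBase_restrict_iff_of_forall_encard_eq {X B : Set α} {k : ℕ∞} (hX : X ⊆ M.E)
    (hne : ∃ S ⊆ X, S.encard = k) (hk : ∀ S ⊆ X, S.encard = k → M.IsBase S) :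
    (M ↾ X).IsBase B ↔ B ⊆ X ∧ B.encard = k := by
  obtain ⟨S, hSX, hSk⟩ := hne
  have hSbase := hk S hSX hSk
  rw [(hSbase.spanning_of_superset hSX hX).isBase_restrict_iff]
  exact ⟨fun ⟨hB, hBX⟩ ↦ ⟨hBX, hSk ▸ hB.encard_eq_encard_of_isBase hSbase⟩,
    fun ⟨hBX, hBk⟩ ↦ ⟨hk B hBX hBk, hBX⟩⟩

end Matroid

open Matroid in
theorem minor_is_U24_general {α : Type*} (M : Matroid α)
    (B₁ B₂ : Set α) (h₁ : M.IsBase B₁) (h₂ : M.IsBase B₂)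
    (hd : (B₁ \ B₂).ncard = 2) (hΔ : M.deltaPairs B₁ B₂ = 3) :
    (B₁ ∆ B₂).ncard = 4 ∧
    (∀ B, ((M.con (B₁ ∩ B₂)).restrict (B₁ ∆ B₂)).IsBase B ↔ B ⊆ B₁ ∆ B₂ ∧ B.ncard = 2) := by
  rw [ncard_eq_two_iff_encard_eq_two] at hd
  have hC : M.Indep (B₁ ∩ B₂) := h₁.indep.subset inter_subset_left
  have hXC : Disjoint (B₁ ∆ B₂) (B₁ ∩ B₂) := disjoint_symmDiff_inf _ _
  have hXE : B₁ ∆ B₂ ⊆ (M ／ (B₁ ∩ B₂)).E := by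
    rw [contract_ground]
    exact subset_sdiff.2
      ⟨symmDiff_subset_union.trans (union_subset h₁.subset_ground h₂.subset_ground), hXC⟩
  have hbase : ∀ S ⊆ B₁ ∆ B₂, S.encard = 2 → (M ／ (B₁ ∩ B₂)).IsBase S := fun S hS hS₂ ↦
    hC.contract_isBase_iff.2 ⟨union_comm S _ ▸
      isBase_inter_union_of_deltaPairs_eq_three h₁ h₂ hd hΔ hS hS₂, hXC.mono_left hS⟩
  refine ⟨by rw [ncard_def, h₁.encard_symmDiff h₂, hd]; rfl, fun B ↦ ?_⟩
  rw [con_eq_contract, isBase_restrict_iff_of_forall_encard_eq hXE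
    ⟨B₁ \ B₂, fun _ hx ↦ Or.inl hx, hd⟩ hbase, ncard_eq_two_iff_encard_eq_two]

/-- If `|B₁ \ B₂| = 2` and `Δ(B₁,B₂) = 3`, then `(M / (B₁ ∩ B₂))|_(B₁ △ B₂) ≅ U_{2,4}`. -/
theorem minor_is_U24 {α : Type*} (M : Matroid α) (hfin : M.E.Finite)
    (B₁ B₂ : Set α) (h₁ : M.IsBase B₁) (h₂ : M.IsBase B₂)
    (hd : (B₁ \ B₂).ncard = 2) (hΔ : M.deltaPairs B₁ B₂ = 3) :
    (B₁ ∆ B₂).ncard = 4 ∧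
    (∀ B, ((M.con (B₁ ∩ B₂)).restrict (B₁ ∆ B₂)).IsBase B ↔ B ⊆ B₁ ∆ B₂ ∧ B.ncard = 2) :=
  minor_is_U24_general M B₁ B₂ h₁ h₂ hd hΔ
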